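/- For every n ≥ 6, every n-vertex 3-graph with no two disjoint edges has at most binom(n−1,2) edges, i.e., ex^{(1)}(n;M) = binom(n−1,2); moreover, for n ≥ 7, the full star S_n is the unique (up to isomorphism) n-vertex 3-graph with no two disjoint edges having binom(n−1,2) edges. -/

import Mathlib

/-!
Common framework: 3-uniform hypergraphs (`3-graphs`) with vertex set a `Finset ℕ`,
copies/embeddings, isomorphism, connectivity, concrete 3-graphs from the paper,
and (higher order) Turán-extremality.
-/

structure ThreeGraph where
  verts : Finset ℕ
  edges : Finset (Finset ℕ)
  sub : ∀ e ∈ edges, e ⊆ verts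
  card3 : ∀ e ∈ edges, e.card = 3

namespace ThreeGraph

/-- The 3-graph on vertex set `V` whose edges are the 3-element subsets of `V`
satisfying the predicate `p`. -/
noncomputable def mk3 (V : Finset ℕ) (p : Finset ℕ → Prop) : ThreeGraph :=
  letI := Classical.decPred p
  { verts := V
    edges := (V.powersetCard 3).filter p
    sub := fun e he => (Finset.mem_powersetCard.mp (Finset.mem_filter.mp he).1).1
    card3 := fun e he => (Finset.mem_powersetCard.mp (Finset.mem_filter.mp he).1).2 }

/-- `H` contains a copy of `F` (i.e. a subhypergraph of `H` is isomorphic to `F`);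
equivalently, `F` embeds into `H`. -/
def HasCopy (F H : ThreeGraph) : Prop :=
  ∃ f : ℕ → ℕ, Set.InjOn f ↑F.verts ∧ (∀ v ∈ F.verts, f v ∈ H.verts) ∧
    ∀ e ∈ F.edges, e.image f ∈ H.edges

/-- `F` and `H` are isomorphic 3-graphs. -/
def Iso (F H : ThreeGraph) : Prop :=
  ∃ f : ℕ → ℕ, Set.InjOn f ↑F.verts ∧ F.verts.image f = H.verts ∧
    F.edges.image (fun e => e.image f) = H.edges

def Adj (H : ThreeGraph) (u v : ℕ) : Prop :=
  ∃ e ∈ H.edges, u ∈ e ∧ v ∈ e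

/-- Connectivity: any two vertices are joined by a walk
(consecutive vertices share an edge). -/
def Connected (H : ThreeGraph) : Prop :=
  ∀ u ∈ H.verts, ∀ v ∈ H.verts, Relation.ReflTransGen H.Adj u v

/-- `P`: the loose 3-uniform path of length three. -/
noncomputable def pathP : ThreeGraph :=
  mk3 (Finset.range 7) (fun e => e = {0,1,2} ∨ e = {2,3,4} ∨ e = {4,5,6})

/-- `C`: the triangle. -/
noncomputable def triC : ThreeGraph :=
  mk3 (Finset.range 6) (fun e => e = {0,1,2} ∨ e = {2,3,4} ∨ e = {4,5,0})

/-- `M`: a pair of disjoint edges. -/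
noncomputable def matchM : ThreeGraph :=
  mk3 (Finset.range 6) (fun e => e = {0,1,2} ∨ e = {3,4,5})

/-- `P₂`: a pair of edges sharing exactly one vertex. -/
noncomputable def path2 : ThreeGraph :=
  mk3 (Finset.range 5) (fun e => e = {0,1,2} ∨ e = {2,3,4})

/-- `P₂ ∪ K₃`. -/
noncomputable def p2K3 : ThreeGraph :=
  mk3 (Finset.range 8) (fun e => e = {0,1,2} ∨ e = {2,3,4} ∨ e = {5,6,7})

/-- `K_m`: the complete 3-graph on `m` vertices. -/
noncomputable def K (m : ℕ) : ThreeGraph := mk3 (Finset.range m) (fun _ => True)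

/-- `S_n`: the full star on `n` vertices, with center `0`. -/
noncomputable def starS (n : ℕ) : ThreeGraph := mk3 (Finset.range n) (fun e => 0 ∈ e)

/-- The comet `Co(n)`: `K₄` on `{0,1,2,3}` and the full star with center `0`
on `{0} ∪ {4,…,n-1}`. -/
noncomputable def comet (n : ℕ) : ThreeGraph :=
  mk3 (Finset.range n)
    (fun e => e ⊆ ({0,1,2,3} : Finset ℕ) ∨ (0 ∈ e ∧ ∀ v ∈ e, v = 0 ∨ 4 ≤ v))

/-- `G₁(n)` with `x,y,z = 0,1,2` and `v = 3`. -/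
noncomputable def G1 (n : ℕ) : ThreeGraph :=
  mk3 (Finset.range n)
    (fun e => e = {0,1,2} ∨ (3 ∈ e ∧ (e ∩ ({0,1,2} : Finset ℕ)).Nonempty))

/-- `G₂(n)` with `x,y,z = 0,1,2`. -/
noncomputable def G2 (n : ℕ) : ThreeGraph :=
  mk3 (Finset.range n)
    (fun e => e = {0,1,2} ∨ (e ∩ ({0,1,2} : Finset ℕ)).card = 2)

/-- `G₃(n)` with `x = 0`, `y₁,y₂ = 1,2`, `z₁,z₂ = 3,4`. -/
noncomputable def G3 (n : ℕ) : ThreeGraph :=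
  mk3 (Finset.range n)
    (fun e => (e ⊆ ({0,1,2,3,4} : Finset ℕ) ∧ e ≠ {1,2,3} ∧ e ≠ {1,2,4}) ∨
      (∃ v ∈ e, 5 ≤ v ∧ (e = {0,3,v} ∨ e = {0,4,v})))

/-- `K₅⁺²`: `K₅` on `{0,…,4}` with `a,b = 0,1`, `c,d = 5,6`. -/
noncomputable def K5plus2 : ThreeGraph :=
  mk3 (Finset.range 7)
    (fun e => e ⊆ ({0,1,2,3,4} : Finset ℕ) ∨ e = {0,1,5} ∨ e = {0,1,6})

/-- The rocket `Ro(n)`: the full star with center `x = 0` on `{0} ∪ {5,…,n-1}`,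
plus vertices `a,b,c,d = 1,2,3,4` and edges `{x,a,b}, {a,b,c}, {a,b,d}`. -/
noncomputable def rocket (n : ℕ) : ThreeGraph :=
  mk3 (Finset.range n)
    (fun e => (0 ∈ e ∧ ∀ v ∈ e, v = 0 ∨ 5 ≤ v) ∨ e = {0,1,2} ∨ e = {1,2,3} ∨ e = {1,2,4})

/-- `K₆ ∪ K₁`. -/
noncomputable def K6K1 : ThreeGraph :=
  mk3 (Finset.range 7) (fun e => e ⊆ Finset.range 6)

/-- `K₆ ∪ K_{n-6}`. -/
noncomputable def K6K (n : ℕ) : ThreeGraph :=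
  mk3 (Finset.range n) (fun e => e ⊆ Finset.range 6 ∨ ∀ v ∈ e, 6 ≤ v)

/-- `K₆ ∪ S_{n-6}` (star centered at `6`). -/
noncomputable def K6star (n : ℕ) : ThreeGraph :=
  mk3 (Finset.range n) (fun e => e ⊆ Finset.range 6 ∨ (6 ∈ e ∧ ∀ v ∈ e, 6 ≤ v))

/-- `K₄ ∪ S_{n-4}` (star centered at `4`). -/
noncomputable def K4star (n : ℕ) : ThreeGraph :=
  mk3 (Finset.range n) (fun e => e ⊆ Finset.range 4 ∨ (4 ∈ e ∧ ∀ v ∈ e, 4 ≤ v))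

/-- `K₆ ∪ K₆ ∪ K₁` (on 13 vertices). -/
noncomputable def K6K6K1 : ThreeGraph :=
  mk3 (Finset.range 13) (fun e => e ⊆ Finset.range 6 ∨ e ⊆ Finset.Ico 6 12)

/-- `2K₆ ∪ 2K₁` (on 14 vertices). -/
noncomputable def twoK6twoK1 : ThreeGraph :=
  mk3 (Finset.range 14) (fun e => e ⊆ Finset.range 6 ∨ e ⊆ Finset.Ico 6 12)

/-- `K₅ ∪ K₅`. -/
noncomputable def K5K5 : ThreeGraph :=
  mk3 (Finset.range 10) (fun e => e ⊆ Finset.range 5 ∨ ∀ v ∈ e, 5 ≤ v)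

/-- `K₆ ∪ G₁(7)` (with `G₁(7)` on `{6,…,12}`, `x,y,z = 6,7,8`, `v = 9`). -/
noncomputable def K6G1 : ThreeGraph :=
  mk3 (Finset.range 13)
    (fun e => e ⊆ Finset.range 6 ∨ ((∀ v ∈ e, 6 ≤ v) ∧
      (e = {6,7,8} ∨ (9 ∈ e ∧ (e ∩ ({6,7,8} : Finset ℕ)).Nonempty))))

/-- `K₆ ∪ G₂(7)` (with `G₂(7)` on `{6,…,12}`, `x,y,z = 6,7,8`). -/
noncomputable def K6G2 : ThreeGraph :=
  mk3 (Finset.range 13)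
    (fun e => e ⊆ Finset.range 6 ∨ ((∀ v ∈ e, 6 ≤ v) ∧
      (e = {6,7,8} ∨ (e ∩ ({6,7,8} : Finset ℕ)).card = 2)))

/-- `H` is a member of `S` with the maximum number of edges. -/
def IsMaxIn (S : Set ThreeGraph) (H : ThreeGraph) : Prop :=
  H ∈ S ∧ ∀ G ∈ S, G.edges.card ≤ H.edges.card

/-- `cand 𝓕 n s` is the set of `n`-vertex `𝓕`-free 3-graphs not contained in any
`t`-extremal 3-graph for `t ≤ s`; so the `(s+1)`-st order Turán number of `𝓕` is the
maximal number of edges over `cand 𝓕 n s`, and the `(s+1)`-extremal 3-graphs are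
exactly those satisfying `IsMaxIn (cand 𝓕 n s)`. -/
def cand (𝓕 : Set ThreeGraph) (n : ℕ) : ℕ → Set ThreeGraph
  | 0 => {H | H.verts.card = n ∧ ∀ F ∈ 𝓕, ¬ HasCopy F H}
  | (s+1) => {H | H ∈ cand 𝓕 n s ∧ ∀ H', IsMaxIn (cand 𝓕 n s) H' → ¬ HasCopy H H'}

end ThreeGraph

/-!
An `M`-free 3-graph is an intersecting family of triples, so the bound is the Erdős–Ko–Rado
theorem, transported from `Fin n` to the vertex set.

Uniqueness comes from the Hilton–Milner bound: an intersecting family `𝒜` of triples of an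
`n`-set `V`, `n ≥ 7`, without a common point has at most `3n - 8 < (n - 1).choose 2` members.
Fix `A ∈ 𝒜` and put `W = V \ A`. Any other member meets `A` either in one point `x`, leaving a
pair of the link `L x ⊆ W.powersetCard 2`, or in `A \ {x}`, leaving a point of `W` that lies in
every pair of `L x`. So `|𝒜| ≤ 1 + ∑_{x ∈ A} (|L x| + |C x|)`, where `C x` is the set of common
points of `L x`. Links of distinct points of `A` are cross-intersecting, and two nonempty
cross-intersecting families of pairs have `(|L| + |C|) + (|L'| + |C'|) ≤ 2|W|`: if `L` contains
two disjoint pairs, `L'` consists of their transversals. If at most one link `L x` is nonempty, a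
member of `𝒜` avoiding `x` contains `A \ {x}`, so `C x ≠ ∅`; then `L x` is intersecting and
Erdős–Ko–Rado for pairs gives `|L x| + |C x| ≤ |W|`.
-/

theorem Nat.choose_two_sub_choose_two {m : ℕ} (hm : 2 ≤ m) :
    m.choose 2 - (m - 2).choose 2 = 2 * m - 3 := by
  obtain ⟨k, rfl⟩ := Nat.exists_eq_add_of_le' hm
  have h1 : (k + 2).choose 2 = (k + 1).choose 1 + (k + 1).choose 2 := Nat.choose_succ_succ' _ _
  have h2 : (k + 1).choose 2 = k.choose 1 + k.choose 2 := Nat.choose_succ_succ' _ _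
  simp only [Nat.choose_one_right] at h1 h2
  rw [Nat.add_sub_cancel]
  omega

theorem Nat.three_mul_sub_eight_lt_choose_two {n : ℕ} (hn : 7 ≤ n) :
    3 * n - 8 < (n - 1).choose 2 := by
  obtain ⟨k, rfl⟩ := Nat.exists_eq_add_of_le' hn
  rw [Nat.choose_two_right, Nat.lt_iff_add_one_le, Nat.le_div_iff_mul_le two_pos,
    show k + 7 - 1 = k + 6 by omega, show k + 6 - 1 = k + 5 by omega,
    show 3 * (k + 7) - 8 = 3 * k + 13 by omega]
  nlinarith

namespace Finset

variable {α : Type*} [DecidableEq α] {V A W e p q r : Finset α} {𝒜 L L' : Finset (Finset α)}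
  {x : α}

theorem card_le_choose_of_intersecting {k : ℕ} (h𝒜W : 𝒜 ⊆ W.powersetCard k)
    (h𝒜 : (𝒜 : Set (Finset α)).Intersecting) (hk : k ≤ #W / 2) :
    #𝒜 ≤ (#W - 1).choose (k - 1) := by
  let toFin : Finset α → Finset (Fin #W) :=
    fun s ↦ (s.subtype (· ∈ W)).map W.equivFin.toEmbedding
  let ofFin : Finset (Fin #W) → Finset α :=
    map (W.equivFin.symm.toEmbedding.trans (Function.Embedding.subtype _))
  have hleft : ∀ s ∈ 𝒜, ofFin (toFin s) = s := fun s hs ↦ by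
    simp only [ofFin, toFin, map_map]
    convert subtype_map_of_mem fun x hx ↦ (mem_powersetCard.1 (h𝒜W hs)).1 hx using 2
    ext; simp
  have hcard : ∀ s ∈ 𝒜, #(toFin s) = #s := fun s hs ↦ by
    simpa only [ofFin, card_map] using congrArg card (hleft s hs)
  have hinj : Set.InjOn toFin 𝒜 := fun s hs t ht hst ↦ by
    rw [← hleft s hs, ← hleft t ht, hst]
  calc #𝒜 = #(𝒜.image toFin) := (card_image_of_injOn hinj).symm
    _ ≤ (#W - 1).choose (k - 1) := by
      refine erdos_ko_rado ?_ ?_ hk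
      · simp only [coe_image]
        rintro _ ⟨s, hs, rfl⟩ _ ⟨t, ht, rfl⟩ hst
        refine h𝒜 hs ht ?_
        rw [← hleft s hs, ← hleft t ht]
        exact (disjoint_map _).2 hst
      · simp only [coe_image]
        rintro _ ⟨s, hs, rfl⟩
        rw [hcard s hs]
        exact (mem_powersetCard.1 (h𝒜W hs)).2

lemma card_inter_le_one_of_ne (hp : #p = 2) (hq : #q = 2) (hpq : p ≠ q) : #(p ∩ q) ≤ 1 := by
  by_contra! h
  have hp' := eq_of_subset_of_card_le inter_subset_left (by omega : #p ≤ #(p ∩ q))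
  have hq' := eq_of_subset_of_card_le inter_subset_right (by omega : #q ≤ #(p ∩ q))
  exact hpq (hp'.symm.trans hq')

lemma card_add_three_le_of_forall_not_disjoint (hLW : L ⊆ W.powersetCard 2) (hqW : q ⊆ W)
    (hq : #q = 2) (hLq : ∀ p ∈ L, ¬Disjoint p q) : #L + 3 ≤ 2 * #W := by
  have hsub : L ⊆ W.powersetCard 2 \ (W \ q).powersetCard 2 := fun p hp ↦
    mem_sdiff.2 ⟨hLW hp, fun hpq ↦ hLq p hp <|
      disjoint_of_subset_left (mem_powersetCard.1 hpq).1 sdiff_disjoint⟩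
  have h2W : 2 ≤ #W := hq ▸ card_le_card hqW
  have := card_le_card hsub
  rw [card_sdiff_of_subset (powersetCard_mono sdiff_subset), card_powersetCard, card_powersetCard,
    card_sdiff_of_subset hqW, hq, Nat.choose_two_sub_choose_two h2W] at this
  omega

lemma subset_union_of_not_disjoint (hr : #r = 2) (hpq : Disjoint p q) (hrp : ¬Disjoint r p)
    (hrq : ¬Disjoint r q) : r ⊆ p ∪ q := by
  obtain ⟨u, hur, hup⟩ := not_disjoint_iff.1 hrp
  obtain ⟨v, hvr, hvq⟩ := not_disjoint_iff.1 hrq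
  have huv : u ≠ v := fun h ↦ disjoint_left.1 hpq hup (h ▸ hvq)
  obtain rfl : {u, v} = r :=
    eq_of_subset_of_card_le (insert_subset hur (singleton_subset_iff.2 hvr)) (by
      rw [hr, card_pair huv])
  exact insert_subset (mem_union_left _ hup) (singleton_subset_iff.2 (mem_union_right _ hvq))

section Transversals

variable (hL : ∀ r ∈ L, #r = 2) (hp : #p = 2) (hq : #q = 2) (hpq : Disjoint p q)
  (hLpq : ∀ r ∈ L, ¬Disjoint r p ∧ ¬Disjoint r q)
include hL hp hq hpq hLpq

lemma card_le_four_of_forall_not_disjoint : #L ≤ 4 := by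
  have hsub : L ⊆ (p ∪ q).powersetCard 2 \ {p, q} := fun r hr ↦ by
    have hr' := hLpq r hr
    refine mem_sdiff.2 ⟨mem_powersetCard.2 ⟨subset_union_of_not_disjoint (hL r hr) hpq hr'.1 hr'.2,
      hL r hr⟩, ?_⟩
    rintro h
    rcases mem_insert.1 h with rfl | h
    · exact hr'.2 hpq
    · exact hr'.1 (mem_singleton.1 h ▸ hpq.symm)
  have hpq' : p ≠ q := by
    rintro rfl
    exact (card_pos.1 (by omega : 0 < #p)).ne_empty ((disjoint_self_iff_empty _).1 hpq)
  have hpqsub : {p, q} ⊆ (p ∪ q).powersetCard 2 := insert_subset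
    (mem_powersetCard.2 ⟨subset_union_left, hp⟩)
    (singleton_subset_iff.2 (mem_powersetCard.2 ⟨subset_union_right, hq⟩))
  calc #L ≤ _ := card_le_card hsub
    _ = 4 := by
      rw [card_sdiff_of_subset hpqsub, card_powersetCard, card_union_of_disjoint hpq, hp, hq,
        card_pair hpq']
      rfl

lemma card_le_two_of_forall_not_disjoint (hLi : (L : Set (Finset α)).Intersecting) : #L ≤ 2 := by
  have hpL : p ∉ L := fun h ↦ (hLpq p h).2 hpq
  have hins : insert p L ⊆ (p ∪ q).powersetCard 2 := insert_subset
    (mem_powersetCard.2 ⟨subset_union_left, hp⟩) fun r hr ↦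
      mem_powersetCard.2 ⟨subset_union_of_not_disjoint (hL r hr) hpq (hLpq r hr).1
        (hLpq r hr).2, hL r hr⟩
  have hinsi : ((insert p L : Finset (Finset α)) : Set (Finset α)).Intersecting := by
    rw [coe_insert]
    refine hLi.insert ?_ fun r hr h ↦ (hLpq r hr).1 h.symm
    rintro rfl
    simp at hp
  have := card_le_choose_of_intersecting hins hinsi (by
    rw [card_union_of_disjoint hpq, hp, hq])
  rw [card_insert_of_notMem hpL, card_union_of_disjoint hpq, hp, hq] at this
  simp only [Nat.add_one_sub_one, Nat.choose_one_right] at this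
  omega

end Transversals

def commonPoints (W : Finset α) (L : Finset (Finset α)) : Finset α :=
  W.filter fun z ↦ ∀ p ∈ L, z ∈ p

@[simp] lemma commonPoints_empty (W : Finset α) : commonPoints W ∅ = W := by
  simp [commonPoints]

lemma commonPoints_subset (hp : p ∈ L) : commonPoints W L ⊆ p :=
  fun _ hz ↦ (mem_filter.1 hz).2 p hp

lemma commonPoints_eq_empty (hp : p ∈ L) (hq : q ∈ L) (hpq : Disjoint p q) :
    commonPoints W L = ∅ :=
  eq_empty_of_forall_notMem fun _ hz ↦
    disjoint_left.1 hpq (commonPoints_subset hp hz) (commonPoints_subset hq hz)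

lemma card_commonPoints_add_min_le (hL : ∀ p ∈ L, #p = 2) (hne : L.Nonempty) :
    #(commonPoints W L) + min #L 2 ≤ 3 := by
  obtain ⟨p, hp⟩ := hne
  rcases le_or_gt #L 1 with h1 | h1
  · have := (card_le_card (commonPoints_subset (W := W) hp)).trans (hL p hp).le
    have := card_pos.2 ⟨p, hp⟩
    omega
  · obtain ⟨q, hq, hqp⟩ := exists_mem_ne h1 p
    have := (card_le_card (subset_inter (commonPoints_subset (W := W) hp)
      (commonPoints_subset hq))).trans (card_inter_le_one_of_ne (hL p hp) (hL q hq) hqp.symm)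
    omega

lemma card_add_card_commonPoints_le (hLW : L ⊆ W.powersetCard 2)
    (hL : (L : Set (Finset α)).Intersecting) (hW : 4 ≤ #W) :
    #L + #(commonPoints W L) ≤ #W := by
  rcases L.eq_empty_or_nonempty with rfl | hne
  · simp
  have h1 := card_le_choose_of_intersecting hLW hL (by omega)
  have h2 := card_commonPoints_add_min_le (W := W)
    (fun p hp ↦ (mem_powersetCard.1 (hLW hp)).2) hne
  simp only [Nat.add_one_sub_one, Nat.choose_one_right] at h1
  omega

lemma exists_disjoint_of_not_intersecting (hL : ¬(L : Set (Finset α)).Intersecting) :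
    ∃ p ∈ L, ∃ q ∈ L, Disjoint p q := by
  simpa [Set.Intersecting] using hL

lemma card_add_card_commonPoints_add_le_of_disjoint (hLW : L ⊆ W.powersetCard 2)
    (hL'W : L' ⊆ W.powersetCard 2) (hp : p ∈ L) (hq : q ∈ L) (hpq : Disjoint p q)
    (hne' : L'.Nonempty) (hLL' : ∀ s ∈ L, ∀ t ∈ L', ¬Disjoint s t) (hW : 4 ≤ #W) :
    #L + #(commonPoints W L) + (#L' + #(commonPoints W L')) ≤ 2 * #W := by
  have two : ∀ {M}, M ⊆ W.powersetCard 2 → ∀ r ∈ M, #r = 2 :=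
    fun hM r hr ↦ (mem_powersetCard.1 (hM hr)).2
  have hL'pq : ∀ t ∈ L', ¬Disjoint t p ∧ ¬Disjoint t q :=
    fun t ht ↦ ⟨fun h ↦ hLL' p hp t ht h.symm, fun h ↦ hLL' q hq t ht h.symm⟩
  rw [commonPoints_eq_empty hp hq hpq, card_empty]
  by_cases hL' : (L' : Set (Finset α)).Intersecting
  · obtain ⟨t, ht⟩ := hne'
    have h1 := card_add_three_le_of_forall_not_disjoint hLW (mem_powersetCard.1 (hL'W ht)).1
      (two hL'W t ht) fun s hs ↦ hLL' s hs t ht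
    have h2 := card_le_two_of_forall_not_disjoint (two hL'W) (two hLW p hp) (two hLW q hq) hpq
      hL'pq hL'
    have h3 := card_commonPoints_add_min_le (W := W) (two hL'W) ⟨t, ht⟩
    omega
  · obtain ⟨s, hs, t, ht, hst⟩ := exists_disjoint_of_not_intersecting hL'
    rw [commonPoints_eq_empty hs ht hst, card_empty]
    have h1 := card_le_four_of_forall_not_disjoint (two hL'W) (two hLW p hp) (two hLW q hq) hpq
      hL'pq
    have h2 := card_le_four_of_forall_not_disjoint (two hLW) (two hL'W s hs) (two hL'W t ht) hst
      fun r hr ↦ ⟨hLL' r hr s hs, hLL' r hr t ht⟩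
    omega

lemma card_add_card_commonPoints_add_le (hLW : L ⊆ W.powersetCard 2)
    (hL'W : L' ⊆ W.powersetCard 2) (hne : L.Nonempty) (hne' : L'.Nonempty)
    (hLL' : ∀ s ∈ L, ∀ t ∈ L', ¬Disjoint s t) (hW : 4 ≤ #W) :
    #L + #(commonPoints W L) + (#L' + #(commonPoints W L')) ≤ 2 * #W := by
  by_cases hL : (L : Set (Finset α)).Intersecting
  · by_cases hL' : (L' : Set (Finset α)).Intersecting
    · have := card_add_card_commonPoints_le hLW hL hW
      have := card_add_card_commonPoints_le hL'W hL' hW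
      omega
    · obtain ⟨s, hs, t, ht, hst⟩ := exists_disjoint_of_not_intersecting hL'
      rw [add_comm]
      exact card_add_card_commonPoints_add_le_of_disjoint hL'W hLW hs ht hst hne
        (fun t ht s hs h ↦ hLL' s hs t ht h.symm) hW
  · obtain ⟨s, hs, t, ht, hst⟩ := exists_disjoint_of_not_intersecting hL
    exact card_add_card_commonPoints_add_le_of_disjoint hLW hL'W hs ht hst hne' hLL' hW

def vertexLink (𝒜 : Finset (Finset α)) (W : Finset α) (x : α) : Finset (Finset α) :=
  (W.powersetCard 2).filter fun p ↦ insert x p ∈ 𝒜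

def pairLink (𝒜 : Finset (Finset α)) (W B : Finset α) : Finset α :=
  W.filter fun z ↦ insert z B ∈ 𝒜

section FixedEdge

variable (h𝒜 : (𝒜 : Set (Finset α)).Intersecting)
include h𝒜

lemma eq_or_mem_vertexLink_or_mem_pairLink (h𝒜V : 𝒜 ⊆ V.powersetCard 3) (hA : A ∈ 𝒜)
    (he : e ∈ 𝒜) :
    e = A ∨ (∃ x ∈ A, ∃ p ∈ vertexLink 𝒜 (V \ A) x, e = insert x p) ∨
      ∃ x ∈ A, ∃ z ∈ pairLink 𝒜 (V \ A) (A.erase x), e = insert z (A.erase x) := by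
  obtain ⟨heV, he3⟩ := mem_powersetCard.1 (h𝒜V he)
  have hA3 := (mem_powersetCard.1 (h𝒜V hA)).2
  have hpos : 0 < #(e ∩ A) := card_pos.2 (not_disjoint_iff_nonempty_inter.1 (h𝒜 he hA))
  have hle : #(e ∩ A) ≤ 3 := hA3 ▸ card_le_card inter_subset_right
  have hout : #(e \ A) = 3 - #(e ∩ A) := by rw [card_sdiff, inter_comm, he3]
  interval_cases h : #(e ∩ A)
  · obtain ⟨x, hx⟩ := card_eq_one.1 h
    have hxe : x ∈ e ∩ A := hx ▸ mem_singleton_self x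
    refine Or.inr (Or.inl ⟨x, (mem_inter.1 hxe).2, e.erase x, mem_filter.2 ⟨?_, ?_⟩,
      (insert_erase (mem_inter.1 hxe).1).symm⟩)
    · refine mem_powersetCard.2 ⟨fun y hy ↦ ?_, by rw [card_erase_of_mem (mem_inter.1 hxe).1, he3]⟩
      obtain ⟨hyx, hye⟩ := mem_erase.1 hy
      exact mem_sdiff.2 ⟨heV hye, fun hyA ↦ hyx (mem_singleton.1 (hx ▸ mem_inter.2 ⟨hye, hyA⟩))⟩
    · rwa [insert_erase (mem_inter.1 hxe).1]
  · obtain ⟨x, hxA, hxe⟩ := not_subset.1 fun hAe : A ⊆ e ↦ by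
      rw [inter_eq_right.2 hAe, hA3] at h
      omega
    have heA : e ∩ A = A.erase x := eq_of_subset_of_card_le
      (fun y hy ↦ mem_erase.2 ⟨ne_of_mem_of_not_mem (mem_inter.1 hy).1 hxe, (mem_inter.1 hy).2⟩)
      (by rw [card_erase_of_mem hxA, hA3, h])
    obtain ⟨z, hz⟩ := card_eq_one.1 hout
    have hez : e = insert z (A.erase x) := by
      rw [insert_eq, ← hz, ← heA, sdiff_union_inter]
    have hzV : z ∈ V \ A := sdiff_subset_sdiff heV subset_rfl (hz ▸ mem_singleton_self z)
    exact Or.inr (Or.inr ⟨x, hxA, z, mem_filter.2 ⟨hzV, hez ▸ he⟩, hez⟩)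
  · left
    have hAe : e ∩ A = A := eq_of_subset_of_card_le inter_subset_right (by rw [h, hA3])
    exact (eq_of_subset_of_card_le (inter_eq_right.1 hAe) (by rw [he3, hA3])).symm

lemma card_le_one_add_sum_vertexLink_pairLink (h𝒜V : 𝒜 ⊆ V.powersetCard 3) (hA : A ∈ 𝒜) :
    #𝒜 ≤ 1 + ∑ x ∈ A, (#(vertexLink 𝒜 (V \ A) x) + #(pairLink 𝒜 (V \ A) (A.erase x))) := by
  have hsub : 𝒜 ⊆ {A} ∪ A.biUnion fun x ↦ (vertexLink 𝒜 (V \ A) x).image (insert x) ∪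
      (pairLink 𝒜 (V \ A) (A.erase x)).image (insert · (A.erase x)) := fun e he ↦ by
    rcases eq_or_mem_vertexLink_or_mem_pairLink h𝒜 h𝒜V hA he with
      rfl | ⟨x, hx, p, hp, rfl⟩ | ⟨x, hx, z, hz, rfl⟩
    · exact mem_union_left _ (mem_singleton_self _)
    · exact mem_union_right _ (mem_biUnion.2 ⟨x, hx, mem_union_left _ (mem_image_of_mem _ hp)⟩)
    · exact mem_union_right _ (mem_biUnion.2 ⟨x, hx, mem_union_right _
        (mem_image_of_mem (insert · (A.erase x)) hz)⟩)
  calc #𝒜 ≤ #({A} ∪ _) := card_le_card hsub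
    _ ≤ 1 + ∑ x ∈ A, #((vertexLink 𝒜 (V \ A) x).image (insert x) ∪
        (pairLink 𝒜 (V \ A) (A.erase x)).image (insert · (A.erase x))) :=
      (card_union_le _ _).trans (add_le_add (card_singleton A).le card_biUnion_le)
    _ ≤ _ := by
      gcongr
      exact (card_union_le _ _).trans (add_le_add card_image_le card_image_le)

lemma not_disjoint_of_mem_vertexLink {y : α} {p q : Finset α} (hx : x ∈ A) (hy : y ∈ A)
    (hxy : x ≠ y) (hp : p ∈ vertexLink 𝒜 (V \ A) x) (hq : q ∈ vertexLink 𝒜 (V \ A) y) :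
    ¬Disjoint p q := by
  obtain ⟨hpW, hp𝒜⟩ := mem_filter.1 hp
  obtain ⟨hqW, hq𝒜⟩ := mem_filter.1 hq
  have hpA : ∀ w ∈ p, w ∉ A := fun w hw ↦ (mem_sdiff.1 ((mem_powersetCard.1 hpW).1 hw)).2
  have hqA : ∀ w ∈ q, w ∉ A := fun w hw ↦ (mem_sdiff.1 ((mem_powersetCard.1 hqW).1 hw)).2
  intro hpq
  obtain ⟨w, hwp, hwq⟩ := not_disjoint_iff.1 (h𝒜 hp𝒜 hq𝒜)
  rcases mem_insert.1 hwp with rfl | hwp <;> rcases mem_insert.1 hwq with rfl | hwq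
  · exact hxy rfl
  · exact hqA w hwq hx
  · exact hpA w hwp hy
  · exact disjoint_left.1 hpq hwp hwq

lemma pairLink_subset_commonPoints (hx : x ∈ A) :
    pairLink 𝒜 (V \ A) (A.erase x) ⊆ commonPoints (V \ A) (vertexLink 𝒜 (V \ A) x) := by
  intro z hz
  obtain ⟨hzW, hz𝒜⟩ := mem_filter.1 hz
  refine mem_filter.2 ⟨hzW, fun p hp ↦ ?_⟩
  obtain ⟨hpW, hp𝒜⟩ := mem_filter.1 hp
  have hpA : ∀ w ∈ p, w ∉ A := fun w hw ↦ (mem_sdiff.1 ((mem_powersetCard.1 hpW).1 hw)).2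
  obtain ⟨w, hwz, hwp⟩ := not_disjoint_iff.1 (h𝒜 hz𝒜 hp𝒜)
  rcases mem_insert.1 hwz with rfl | hwA <;> rcases mem_insert.1 hwp with rfl | hwp
  · exact absurd hx (mem_sdiff.1 hzW).2
  · exact hwp
  · exact absurd hwA (notMem_erase w A)
  · exact absurd (mem_of_mem_erase hwA) (hpA w hwp)

lemma pairLink_nonempty (h𝒜V : 𝒜 ⊆ V.powersetCard 3) (hA : A ∈ 𝒜) (hx : x ∈ A)
    (hL : ∀ y ∈ A, y ≠ x → vertexLink 𝒜 (V \ A) y = ∅) (he : e ∈ 𝒜) (hxe : x ∉ e) :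
    (pairLink 𝒜 (V \ A) (A.erase x)).Nonempty := by
  rcases eq_or_mem_vertexLink_or_mem_pairLink h𝒜 h𝒜V hA he with
    rfl | ⟨y, hy, p, hp, rfl⟩ | ⟨y, hy, z, hz, rfl⟩
  · exact absurd hx hxe
  · rw [hL y hy fun hyx ↦ hxe (hyx ▸ mem_insert_self y p)] at hp
    exact absurd hp (notMem_empty p)
  · obtain rfl : y = x := by
      by_contra hyx
      exact hxe (mem_insert_of_mem (mem_erase.2 ⟨Ne.symm hyx, hx⟩))
    exact ⟨z, hz⟩

lemma card_vertexLink_add_card_commonPoints_le (h𝒜V : 𝒜 ⊆ V.powersetCard 3) (hA : A ∈ 𝒜)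
    (hx : x ∈ A) (hxe : ∃ e ∈ 𝒜, x ∉ e) (hW : 4 ≤ #(V \ A))
    (hL : vertexLink 𝒜 (V \ A) x = ∅ ∨ ∀ y ∈ A, y ≠ x → vertexLink 𝒜 (V \ A) y = ∅) :
    #(vertexLink 𝒜 (V \ A) x) + #(commonPoints (V \ A) (vertexLink 𝒜 (V \ A) x)) ≤ #(V \ A) := by
  refine card_add_card_commonPoints_le (filter_subset _ _) ?_ hW
  rcases hL with hL | hL
  · rw [hL, coe_empty]
    exact Set.intersecting_empty
  obtain ⟨e, he, hxe⟩ := hxe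
  obtain ⟨z, hz⟩ := pairLink_nonempty h𝒜 h𝒜V hA hx hL he hxe
  have hzC := (mem_filter.1 (pairLink_subset_commonPoints h𝒜 hx hz)).2
  exact fun p hp q hq ↦ not_disjoint_iff.2 ⟨z, hzC p hp, hzC q hq⟩

end FixedEdge

theorem card_le_of_intersecting_of_forall_exists_notMem (h𝒜V : 𝒜 ⊆ V.powersetCard 3)
    (h𝒜 : (𝒜 : Set (Finset α)).Intersecting) (hstar : ∀ x, ∃ e ∈ 𝒜, x ∉ e) (hV : 7 ≤ #V) :
    #𝒜 ≤ 3 * #V - 8 := by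
  obtain ⟨v, -⟩ := card_pos.1 (by omega : 0 < #V)
  obtain ⟨A, hA, -⟩ := hstar v
  obtain ⟨hAV, hA3⟩ := mem_powersetCard.1 (h𝒜V hA)
  have hW : #(V \ A) = #V - 3 := by rw [card_sdiff_of_subset hAV, hA3]
  obtain ⟨a, b, c, hab, hac, hbc, habc⟩ := card_eq_three.1 hA3
  have hsum : ∀ g : α → ℕ, ∑ x ∈ A, g x = g a + g b + g c := fun g ↦ by
    rw [habc, sum_insert (by simp [hab, hac]), sum_insert (by simp [hbc]), sum_singleton, add_assoc]
  have hdecomp := card_le_one_add_sum_vertexLink_pairLink h𝒜 h𝒜V hA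
  rw [hsum] at hdecomp
  set L := vertexLink 𝒜 (V \ A)
  set C := fun x ↦ commonPoints (V \ A) (L x)
  have hone : ∀ x y z, A = {x, y, z} → (#(L x) = 0 ∨ #(L y) = 0 ∧ #(L z) = 0) →
      #(L x) + #(C x) ≤ #(V \ A) := fun x y z hxyz h ↦
    card_vertexLink_add_card_commonPoints_le h𝒜 h𝒜V hA (by simp [hxyz]) (hstar x) (by omega)
      (h.imp card_eq_zero.1 fun h w hw hwx ↦ by
        rw [hxyz, mem_insert, mem_insert, mem_singleton] at hw
        rcases hw with rfl | rfl | rfl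
        exacts [absurd rfl hwx, card_eq_zero.1 h.1, card_eq_zero.1 h.2])
  have htwo : ∀ x ∈ A, ∀ y ∈ A, x ≠ y → 0 < #(L x) → 0 < #(L y) →
      #(L x) + #(C x) + (#(L y) + #(C y)) ≤ 2 * #(V \ A) := fun x hx y hy hxy hLx hLy ↦
    card_add_card_commonPoints_add_le (filter_subset _ _) (filter_subset _ _) (card_pos.1 hLx)
      (card_pos.1 hLy) (fun _ hp _ hq ↦ not_disjoint_of_mem_vertexLink h𝒜 hx hy hxy hp hq)
      (by omega)
  have hpair : ∀ x ∈ A, #(pairLink 𝒜 (V \ A) (A.erase x)) ≤ #(C x) :=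
    fun x hx ↦ card_le_card (pairLink_subset_commonPoints h𝒜 hx)
  have ha : a ∈ A := by simp [habc]
  have hb : b ∈ A := by simp [habc]
  have hc : c ∈ A := by simp [habc]
  have := hpair a ha; have := hpair b hb; have := hpair c hc
  have := htwo a ha b hb hab; have := htwo a ha c hc hac; have := htwo b hb c hc hbc
  have := hone a b c habc
  have := hone b a c (habc.trans (insert_comm _ _ _))
  have := hone c a b (habc.trans (by rw [pair_comm b c, insert_comm a c]))
  omega

theorem card_filter_mem_powersetCard (hx : x ∈ V) (k : ℕ) :
    #{e ∈ V.powersetCard (k + 1) | x ∈ e} = (#V - 1).choose k := by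
  rw [← card_erase_of_mem hx, ← card_powersetCard]
  refine card_nbij' (erase · x) (insert x) (fun e he ↦ ?_) (fun s hs ↦ ?_) (fun e he ↦ ?_)
    (fun s hs ↦ ?_)
  · simp only [mem_coe, mem_filter, mem_powersetCard] at he ⊢
    exact ⟨erase_subset_erase x he.1.1, by rw [card_erase_of_mem he.2, he.1.2, Nat.add_sub_cancel]⟩
  · simp only [mem_coe, mem_filter, mem_powersetCard] at hs ⊢
    have hxs : x ∉ s := fun h ↦ (mem_erase.1 (hs.1 h)).1 rfl
    exact ⟨⟨insert_subset hx (hs.1.trans (erase_subset x V)),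
      by rw [card_insert_of_notMem hxs, hs.2]⟩, mem_insert_self x s⟩
  · exact insert_erase (mem_filter.1 he).2
  · exact erase_insert fun h ↦ (mem_erase.1 ((mem_powersetCard.1 hs).1 h)).1 rfl

theorem eq_filter_mem_of_intersecting_of_card_eq (h𝒜V : 𝒜 ⊆ V.powersetCard 3)
    (h𝒜 : (𝒜 : Set (Finset α)).Intersecting) (hV : 7 ≤ #V) (hcard : #𝒜 = (#V - 1).choose 2) :
    ∃ x ∈ V, 𝒜 = {e ∈ V.powersetCard 3 | x ∈ e} := by
  by_cases hstar : ∀ x, ∃ e ∈ 𝒜, x ∉ e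
  · have := card_le_of_intersecting_of_forall_exists_notMem h𝒜V h𝒜 hstar hV
    have := Nat.three_mul_sub_eight_lt_choose_two hV
    omega
  push Not at hstar
  obtain ⟨x, hx⟩ := hstar
  obtain ⟨e, he⟩ := card_pos.1 (hcard ▸ Nat.choose_pos (by omega))
  have hxV : x ∈ V := (mem_powersetCard.1 (h𝒜V he)).1 (hx e he)
  refine ⟨x, hxV, eq_of_subset_of_card_le (fun e he ↦ mem_filter.2 ⟨h𝒜V he, hx e he⟩) ?_⟩
  rw [card_filter_mem_powersetCard hxV, hcard]

theorem image_filter_mem_powersetCard {β : Type*} [DecidableEq β] {σ : α → β}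
    (hσ : Set.InjOn σ V) (hx : x ∈ V) (k : ℕ) :
    {e ∈ V.powersetCard k | x ∈ e}.image (image σ) =
      {e ∈ (V.image σ).powersetCard k | σ x ∈ e} := by
  ext e'
  simp only [mem_image, mem_filter, mem_powersetCard]
  constructor
  · rintro ⟨e, ⟨⟨heV, hek⟩, hxe⟩, rfl⟩
    exact ⟨⟨image_subset_image heV, by rw [card_image_of_injOn (hσ.mono heV), hek]⟩,
      mem_image_of_mem σ hxe⟩
  · rintro ⟨⟨he'V, he'k⟩, hxe'⟩
    have himg : (V.filter (σ · ∈ e')).image σ = e' := by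
      ext y
      simp only [mem_image, mem_filter]
      refine ⟨fun ⟨v, ⟨_, hv⟩, hvy⟩ ↦ hvy ▸ hv, fun hy ↦ ?_⟩
      obtain ⟨v, hv, rfl⟩ := mem_image.1 (he'V hy)
      exact ⟨v, ⟨hv, hy⟩, rfl⟩
    refine ⟨V.filter (σ · ∈ e'), ⟨⟨filter_subset _ _, ?_⟩, mem_filter.2 ⟨hx, hxe'⟩⟩, himg⟩
    rw [← card_image_of_injOn (hσ.mono (filter_subset _ _)), himg, he'k]

end Finset

open Finset

namespace ThreeGraph

lemma mem_mk3_edges {V : Finset ℕ} {p : Finset ℕ → Prop} {e : Finset ℕ} :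
    e ∈ (mk3 V p).edges ↔ e ∈ V.powersetCard 3 ∧ p e := by
  simp [mk3]

lemma edges_subset_powersetCard (H : ThreeGraph) : H.edges ⊆ H.verts.powersetCard 3 :=
  fun e he ↦ mem_powersetCard.2 ⟨H.sub e he, H.card3 e he⟩

lemma starS_edges (n : ℕ) : (starS n).edges = {e ∈ (range n).powersetCard 3 | 0 ∈ e} := by
  ext e
  rw [starS, mem_mk3_edges, mem_filter]

lemma mem_matchM_edges {e : Finset ℕ} : e ∈ matchM.edges ↔ e = {0, 1, 2} ∨ e = {3, 4, 5} := by
  rw [matchM, mem_mk3_edges]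
  constructor
  · exact And.right
  · rintro (rfl | rfl) <;> decide

lemma hasCopy_matchM_iff (H : ThreeGraph) :
    HasCopy matchM H ↔ ∃ e ∈ H.edges, ∃ f ∈ H.edges, Disjoint e f := by
  constructor
  · rintro ⟨g, hg, -, hedges⟩
    refine ⟨_, hedges _ (mem_matchM_edges.2 (Or.inl rfl)), _,
      hedges _ (mem_matchM_edges.2 (Or.inr rfl)), disjoint_left.2 ?_⟩
    rintro y hy hy'
    obtain ⟨i, hi, rfl⟩ := mem_image.1 hy
    obtain ⟨j, hj, hij⟩ := mem_image.1 hy'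
    simp only [mem_insert, mem_singleton] at hi hj
    have := hg (show j ∈ range 6 from mem_range.2 (by omega))
      (show i ∈ range 6 from mem_range.2 (by omega)) hij
    omega
  · rintro ⟨e, he, f, hf, hef⟩
    obtain ⟨a, b, c, -, -, -, rfl⟩ := card_eq_three.1 (H.card3 e he)
    obtain ⟨d, d', d'', -, -, -, rfl⟩ := card_eq_three.1 (H.card3 f hf)
    let g : ℕ → ℕ := fun i ↦ [a, b, c, d, d', d''].getD i 0
    have h012 : ({0, 1, 2} : Finset ℕ).image g = {a, b, c} := by simp [g]
    have h345 : ({3, 4, 5} : Finset ℕ).image g = {d, d', d''} := by simp [g]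
    have hverts : matchM.verts.image g = {a, b, c} ∪ {d, d', d''} := by
      rw [show matchM.verts = {0, 1, 2} ∪ {3, 4, 5} by decide, image_union, h012, h345]
    refine ⟨g, card_image_iff.1 ?_, fun v hv ↦ ?_, fun e' he' ↦ ?_⟩
    · rw [hverts, card_union_of_disjoint hef, H.card3 _ he, H.card3 _ hf]
      rfl
    · have := hverts ▸ mem_image_of_mem g hv
      exact (mem_union.1 this).elim (fun h ↦ H.sub _ he h) (fun h ↦ H.sub _ hf h)
    · rcases mem_matchM_edges.1 he' with rfl | rfl
      · rwa [h012]
      · rwa [h345]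

lemma intersecting_edges_of_not_hasCopy_matchM (H : ThreeGraph) (hH : ¬HasCopy matchM H) :
    (H.edges : Set (Finset ℕ)).Intersecting :=
  fun e he f hf hef ↦ hH ((hasCopy_matchM_iff H).2 ⟨e, he, f, hf, hef⟩)

lemma iso_starS (H : ThreeGraph) {n x : ℕ} (hV : #H.verts = n) (hx : x ∈ H.verts)
    (hE : H.edges = {e ∈ H.verts.powersetCard 3 | x ∈ e}) : Iso H (starS n) := by
  obtain ⟨σ, hσ⟩ := H.verts.finite_toSet.exists_bijOn_of_encard_eq
    (t := ((range n : Finset ℕ) : Set ℕ)) (by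
      rw [Set.encard_coe_eq_coe_finsetCard, Set.encard_coe_eq_coe_finsetCard, card_range, hV])
  have hσV : H.verts.image σ = range n := coe_injective (by simpa using hσ.image_eq)
  have hσx : σ x ∈ range n := hσ.mapsTo hx
  set τ := Equiv.swap (σ x) 0 ∘ σ
  have hτ : Set.InjOn τ H.verts := (Equiv.injective _).comp_injOn hσ.injOn
  have hτV : H.verts.image τ = range n := by
    rw [← image_image, hσV]
    refine eq_of_subset_of_card_le (fun y hy ↦ ?_)
      (card_image_of_injective _ (Equiv.injective _)).ge
    obtain ⟨z, hz, rfl⟩ := mem_image.1 hy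
    rw [Equiv.swap_apply_def]
    split_ifs
    exacts [mem_range.2 ((Nat.zero_le _).trans_lt (mem_range.1 hσx)), hσx, hz]
  refine ⟨τ, hτ, hτV, ?_⟩
  rw [hE, image_filter_mem_powersetCard hτ hx, hτV, starS_edges,
    show τ x = 0 from Equiv.swap_apply_left _ _]

end ThreeGraph

open ThreeGraph
/-- Erdős–Ko–Rado: for `n ≥ 6`, `ex⁽¹⁾(n;M) = binom(n-1,2)`, and for
`n ≥ 7` the full star `S_n` is the unique extremal `M`-free 3-graph. -/
theorem turan_matching_M (n : ℕ) (hn : 6 ≤ n) :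
    (∀ H : ThreeGraph, H.verts.card = n → ¬ HasCopy matchM H →
      H.edges.card ≤ (n - 1).choose 2) ∧
    ((starS n).verts.card = n ∧ ¬ HasCopy matchM (starS n) ∧
      (starS n).edges.card = (n - 1).choose 2) ∧
    (7 ≤ n → ∀ H : ThreeGraph, H.verts.card = n → ¬ HasCopy matchM H →
      H.edges.card = (n - 1).choose 2 → Iso H (starS n)) := by
  refine ⟨fun H hV hH ↦ ?_, ⟨card_range n, ?_, ?_⟩, fun h7 H hV hH hcard ↦ ?_⟩
  · have := card_le_choose_of_intersecting H.edges_subset_powersetCard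
      (intersecting_edges_of_not_hasCopy_matchM H hH) (by omega)
    rwa [hV] at this
  · rw [hasCopy_matchM_iff]
    rintro ⟨e, he, f, hf, hef⟩
    rw [starS_edges] at he hf
    exact disjoint_left.1 hef (mem_filter.1 he).2 (mem_filter.1 hf).2
  · rw [starS_edges, card_filter_mem_powersetCard (mem_range.2 (by omega)) 2, card_range]
  · subst hV
    obtain ⟨x, hx, hE⟩ := eq_filter_mem_of_intersecting_of_card_eq H.edges_subset_powersetCard
      (intersecting_edges_of_not_hasCopy_matchM H hH) h7 hcard
    exact iso_starS H rfl hx hE
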